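/- Let G = (V, E) be a symmetric connected graph on vertices V = {1,...,N} without self-loops, meaning that for any distinct i, j there exists a path i = p_1 → p_2 → ... → p_{d_ij} = j with each (p_k, p_{k+1}) ∈ E, where d_ij is the length of a shortest such path. Let d(G) = max over (i,j) with i ≠ j of d_ij be the diameter and E^c = (V × V) \ E. Then for any points x^1, ..., x^N in R^d, one has L_G ∑_{i,j=1}^N |x^i - x^j|^2 ≤ ∑_{(i,j) ∈ E} |x^i - x^j|^2, where L_G = 1/(1 + d(G)·|E^c|). -/

import Mathlib

/-!
Join `i` to `j` by a shortest path, which has at most `d(G)` distinct edges. The triangle inequality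
along it and Cauchy–Schwarz give `|x^i - x^j|² ≤ d(G) · ∑_{(k,l) ∈ E} |x^k - x^l|²`. Splitting
`∑_{i,j}` into the pairs in `E` and the `|E^c|` pairs outside it then yields the claim.
-/

open Finset

namespace SimpleGraph

variable {V E : Type*} [SeminormedAddCommGroup E] {G : SimpleGraph V} (x : V → E)

theorem Walk.norm_sub_le_sum_darts {u v : V} (w : G.Walk u v) :
    ‖x u - x v‖ ≤ (w.darts.map fun e => ‖x e.fst - x e.snd‖).sum := by
  induction w with
  | nil => simp
  | cons _ _ ih =>
    rw [darts_cons, List.map_cons, List.sum_cons]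
    exact (norm_sub_le_norm_sub_add_norm_sub _ _ _).trans (add_le_add_right ih _)

theorem Walk.IsPath.sq_norm_sub_le_length_mul_sum [DecidableEq V] {u v : V} {w : G.Walk u v}
    (hw : w.IsPath) :
    ‖x u - x v‖ ^ 2 ≤ w.length * ∑ e ∈ w.darts.toFinset, ‖x e.fst - x e.snd‖ ^ 2 := by
  have hnodup : w.darts.Nodup := darts_nodup_of_support_nodup hw.support_nodup
  have hcard : #w.darts.toFinset = w.length := by
    rw [List.toFinset_card_of_nodup hnodup, length_darts]
  calc ‖x u - x v‖ ^ 2 ≤ (∑ e ∈ w.darts.toFinset, ‖x e.fst - x e.snd‖) ^ 2 := by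
        rw [List.sum_toFinset _ hnodup]
        exact pow_le_pow_left₀ (norm_nonneg _) (w.norm_sub_le_sum_darts x) 2
    _ ≤ w.length * ∑ e ∈ w.darts.toFinset, ‖x e.fst - x e.snd‖ ^ 2 := by
        rw [← hcard]
        exact sq_sum_le_card_mul_sum_sq

theorem sum_darts_le_sum_adj [Fintype V] [DecidableRel G.Adj] {f : V × V → ℝ} (hf : 0 ≤ f)
    (s : Finset G.Dart) :
    ∑ e ∈ s, f e.toProd ≤ ∑ p ∈ univ.filter (fun p : V × V => G.Adj p.1 p.2), f p := by
  classical
  rw [← sum_image fun _ _ _ _ h => Dart.toProd_injective h]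
  refine sum_le_sum_of_subset_of_nonneg ?_ fun p _ _ => hf p
  rintro _ he
  obtain ⟨e, -, rfl⟩ := mem_image.mp he
  simp [e.adj]

theorem Connected.sq_norm_sub_le_diam_mul_sum_adj [Fintype V] [DecidableRel G.Adj]
    (hG : G.Connected) (i j : V) :
    ‖x i - x j‖ ^ 2 ≤
      G.diam * ∑ p ∈ univ.filter (fun p : V × V => G.Adj p.1 p.2), ‖x p.1 - x p.2‖ ^ 2 := by
  classical
  have : Nonempty V := hG.nonempty
  obtain ⟨w, hw, hlen⟩ := hG.exists_path_of_dist i j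
  have hlen_le : (w.length : ℝ) ≤ G.diam := by
    exact_mod_cast hlen ▸ dist_le_diam (G.connected_iff_ediam_ne_top.mp hG)
  calc ‖x i - x j‖ ^ 2 ≤ w.length * ∑ e ∈ w.darts.toFinset, ‖x e.fst - x e.snd‖ ^ 2 :=
        hw.sq_norm_sub_le_length_mul_sum x
    _ ≤ G.diam * ∑ p ∈ univ.filter (fun p : V × V => G.Adj p.1 p.2), ‖x p.1 - x p.2‖ ^ 2 :=
        mul_le_mul hlen_le
          (sum_darts_le_sum_adj (f := fun p => ‖x p.1 - x p.2‖ ^ 2) (fun _ => sq_nonneg _) _)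
          (sum_nonneg fun _ _ => sq_nonneg _) (Nat.cast_nonneg _)

theorem Connected.sum_sq_norm_sub_le [Fintype V] [DecidableRel G.Adj] (hG : G.Connected) :
    ∑ i, ∑ j, ‖x i - x j‖ ^ 2 ≤
      (1 + G.diam * #(univ.filter (fun p : V × V => ¬ G.Adj p.1 p.2))) *
        ∑ p ∈ univ.filter (fun p : V × V => G.Adj p.1 p.2), ‖x p.1 - x p.2‖ ^ 2 := by
  set S := ∑ p ∈ univ.filter (fun p : V × V => G.Adj p.1 p.2), ‖x p.1 - x p.2‖ ^ 2
  have hnonadj : ∑ p ∈ univ.filter (fun p : V × V => ¬ G.Adj p.1 p.2), ‖x p.1 - x p.2‖ ^ 2 ≤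
      #(univ.filter (fun p : V × V => ¬ G.Adj p.1 p.2)) * (G.diam * S) := by
    rw [← nsmul_eq_mul, ← sum_const]
    exact sum_le_sum fun p _ => hG.sq_norm_sub_le_diam_mul_sum_adj x p.1 p.2
  calc ∑ i, ∑ j, ‖x i - x j‖ ^ 2
      = S + ∑ p ∈ univ.filter (fun p : V × V => ¬ G.Adj p.1 p.2), ‖x p.1 - x p.2‖ ^ 2 := by
        rw [← sum_product', univ_product_univ, sum_filter_add_sum_filter_not]
    _ ≤ _ := by linarith

end SimpleGraph

theorem graph_connectivity_variance_bound_general (N d : ℕ)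
    (G : SimpleGraph (Fin N)) [DecidableRel G.Adj] (hG : G.Connected)
    (x : Fin N → EuclideanSpace ℝ (Fin d)) :
    (1 + (G.diam : ℝ) *
        ((Finset.univ.filter (fun p : Fin N × Fin N => ¬ G.Adj p.1 p.2)).card : ℝ))⁻¹ *
        ∑ i : Fin N, ∑ j : Fin N, ‖x i - x j‖ ^ 2 ≤
      ∑ p ∈ Finset.univ.filter (fun p : Fin N × Fin N => G.Adj p.1 p.2),
        ‖x p.1 - x p.2‖ ^ 2 := by
  rw [inv_mul_le_iff₀ (by positivity)]
  exact hG.sum_sq_norm_sub_le x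

/-- Lemma 2.2 (graph connectivity lemma): for a symmetric connected graph `G` on
`{1,...,N}` without self-loops, with diameter `d(G)` and edge-complement `E^c`,
`L_G ∑_{i,j} ‖x i - x j‖² ≤ ∑_{(i,j)∈E} ‖x i - x j‖²` where
`L_G = 1/(1 + d(G)·|E^c|)`. -/
theorem graph_connectivity_variance_bound (N d : ℕ) (hN : 0 < N)
    (G : SimpleGraph (Fin N)) [DecidableRel G.Adj] (hG : G.Connected)
    (x : Fin N → EuclideanSpace ℝ (Fin d)) :
    (1 + (G.diam : ℝ) *
        ((Finset.univ.filter (fun p : Fin N × Fin N => ¬ G.Adj p.1 p.2)).card : ℝ))⁻¹ *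
        ∑ i : Fin N, ∑ j : Fin N, ‖x i - x j‖ ^ 2 ≤
      ∑ p ∈ Finset.univ.filter (fun p : Fin N × Fin N => G.Adj p.1 p.2),
        ‖x p.1 - x p.2‖ ^ 2 :=
  graph_connectivity_variance_bound_general N d G hG x
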